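/- arXiv:math/0310231 — 7 statements merged into one kernel-verified Lean document; each statement's English description precedes it below -/
import Mathlib

section
/- Let Q be a nondegenerate real quadratic form and L a nonzero linear form on ℝ^d (d ≥ 2) such that the restriction Q|_{L=0} is indefinite. Then {(Q(x), L(x)) : x ∈ ℝ^d} = ℝ². -/
/-- A quadratic polynomial with positive leading coefficient attains every value `≥ C`. -/
lemma quad_attains (B C a c : ℝ) (hc : 0 < c) (hCa : C ≤ a) :
    ∃ t : ℝ, c * t ^ 2 + B * t + C = a := by
  set f : ℝ → ℝ := fun t => c * t ^ 2 + B * t + C with hf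
  set T : ℝ := max 1 ((|B| + (a - C)) / c) with hT
  have hT1 : (1 : ℝ) ≤ T := le_max_left _ _
  have hT0 : (0 : ℝ) ≤ T := le_trans zero_le_one hT1
  have hT2 : |B| + (a - C) ≤ c * T := by
    have h := le_max_right 1 ((|B| + (a - C)) / c)
    calc |B| + (a - C) = c * ((|B| + (a - C)) / c) := by field_simp
      _ ≤ c * T := by exact mul_le_mul_of_nonneg_left h hc.le
  have hfT : a ≤ f T := by
    have h1 : -|B| ≤ B := neg_abs_le B
    simp only [hf]
    nlinarith [mul_le_mul_of_nonneg_left hT2 hT0]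
  have hcont : ContinuousOn f (Set.Icc 0 T) := by fun_prop
  have hmem : a ∈ Set.Icc (f 0) (f T) := by
    constructor
    · simpa [hf] using hCa
    · exact hfT
  obtain ⟨t, _, ht⟩ := intermediate_value_Icc hT0 hcont hmem
  exact ⟨t, ht⟩

/-- If `Q` is a nondegenerate quadratic form and `L` a nonzero linear form on `ℝ^d`
(`d ≥ 2`) such that `Q` restricted to `ker L` is indefinite, then
`{(Q(x), L(x)) : x ∈ ℝ^d} = ℝ²`. -/
theorem stmt_4 (d : ℕ) (hd : 2 ≤ d)
    (Q : QuadraticForm ℝ (Fin d → ℝ))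
    (hQnd : ∀ x : Fin d → ℝ, (∀ y, QuadraticMap.polar Q x y = 0) → x = 0)
    (L : (Fin d → ℝ) →ₗ[ℝ] ℝ) (hL : L ≠ 0)
    (hindef : (∃ x, L x = 0 ∧ 0 < Q x) ∧ (∃ y, L y = 0 ∧ Q y < 0)) :
    {p : ℝ × ℝ | ∃ x : Fin d → ℝ, p = (Q x, L x)} = Set.univ := by
  obtain ⟨⟨p, hLp, hQp⟩, ⟨n, hLn, hQn⟩⟩ := hindef
  ext ⟨a, b⟩
  simp only [Set.mem_setOf_eq, Set.mem_univ, iff_true]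
  -- find v with L v = b
  obtain ⟨u, hu⟩ : ∃ u, L u ≠ 0 := by
    by_contra h
    push_neg at h
    exact hL (LinearMap.ext fun x => by simp [h x])
  set v : Fin d → ℝ := (b / L u) • u with hv
  have hLv : L v = b := by
    simp [hv, map_smul, smul_eq_mul]
    field_simp
  -- expansion : Q (v + t • w) = Q w * t^2 + polar Q v w * t + Q v
  have key : ∀ (w : Fin d → ℝ) (t : ℝ),
      Q (v + t • w) = Q w * t ^ 2 + QuadraticMap.polar Q v w * t + Q v := by
    intro w t
    have h1 : QuadraticMap.polar Q v (t • w) = t * QuadraticMap.polar Q v w :=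
      QuadraticMap.polar_smul_right _ _ _ _
    have h2 : Q (t • w) = t * t * Q w := QuadraticMap.map_smul Q t w
    have h3 : QuadraticMap.polar Q v (t • w) = Q (v + t • w) - Q v - Q (t • w) := rfl
    rw [h1, h2] at h3
    ring_nf
    ring_nf at h3
    linarith
  rcases le_or_gt (Q v) a with hca | hca
  · obtain ⟨t, ht⟩ := quad_attains (QuadraticMap.polar Q v p) (Q v) a (Q p) hQp hca
    refine ⟨v + t • p, ?_⟩
    have : L (v + t • p) = b := by simp [map_add, map_smul, hLp, hLv]
    rw [key p t, ht, this]
  · obtain ⟨t, ht⟩ := quad_attains (-(QuadraticMap.polar Q v n)) (-(Q v)) (-a)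
      (-(Q n)) (by linarith) (by linarith)
    refine ⟨v + t • n, ?_⟩
    have hLx : L (v + t • n) = b := by simp [map_add, map_smul, hLn, hLv]
    have : Q (v + t • n) = a := by rw [key n t]; linarith
    rw [this, hLx]
end

section
/- A pair (Q, L) consisting of a nondegenerate quadratic form Q and a nonzero linear form L on ℝ^d is of type (I) (equivalent to (x₁²+…+x_s²−x_{s+1}²−…−x_d², x_d)) if and only if Q + αL² is degenerate for some α ∈ ℝ. -/
/-!
If `Q = λ·q_s∘g` and `L = μ·x_d∘g` with `q_s` the canonical form, let `ε = ±1` be the last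
diagonal coefficient of `q_s`; then `g⁻¹ e_d` lies in the radical of `Q - (λε/μ²) L²`.

Conversely, let `x ≠ 0` lie in the radical of `Q + α L²`. Then `polar Q x = -2α L(x) · L`, so
nondegeneracy of `Q` forces `α ≠ 0` and `L x ≠ 0`; hence `Q x = -α L(x)² ≠ 0` and `ker L` is the
`Q`-orthogonal complement of `x`. Thus `ℝ^d = ker L ⊕ ℝx` is a `Q`-orthogonal splitting, `Q` is
nondegenerate on `ker L`, and Sylvester's law of inertia on `ker L`, with the signs sorted, writes
`-Q / Q x` as `q_p` in a basis of `ker L` followed by `x`, in which `L` is a multiple of the last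
coordinate. If `p = 0` one uses `q_0 = -q_d` instead.
-/

/-- Two pairs of (quadratic form, linear form) on `ℝ^d` are equivalent if they agree up to
a linear change of coordinates `g ∈ GL(d,ℝ)` and independent nonzero scalings. -/
def PairEquiv (d : ℕ) (Q₁ L₁ Q₂ L₂ : (Fin d → ℝ) → ℝ) : Prop :=
  ∃ (lam mu : ℝ) (g : (Fin d → ℝ) ≃ₗ[ℝ] (Fin d → ℝ)), lam ≠ 0 ∧ mu ≠ 0 ∧
    ∀ x, Q₁ x = lam * Q₂ (g x) ∧ L₁ x = mu * L₂ (g x)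

/-- Canonical quadratic form of type (I) with signature parameter `s`. -/
def canQI (d s : ℕ) : (Fin d → ℝ) → ℝ :=
  fun x => ∑ i : Fin d, (if (i : ℕ) < s then 1 else -1) * x i ^ 2

/-- Canonical linear form `x_d`. -/
def canL (d : ℕ) : (Fin d → ℝ) → ℝ :=
  fun x => if h : 0 < d then x ⟨d - 1, by omega⟩ else 0

open QuadraticMap Finset Module

theorem separatingLeft_associated_iff {R M : Type*} [CommRing R] [Invertible (2 : R)]
    [AddCommGroup M] [Module R M] (Q : QuadraticForm R M) :
    (associated (R := R) Q).SeparatingLeft ↔ ∀ x, (∀ y, polar Q x y = 0) → x = 0 := by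
  simp only [LinearMap.SeparatingLeft, associated_apply]
  exact forall_congr' fun x => imp_congr_left <| forall_congr' fun y =>
    (isUnit_of_invertible _).smul_eq_zero

theorem polar_add_mul_sq {R M : Type*} [CommRing R] [AddCommGroup M] [Module R M]
    (f : M → R) (L : M →ₗ[R] R) (α : R) (x y : M) :
    polar (fun z => f z + α * L z ^ 2) x y = polar f x y + α * (2 * L x * L y) := by
  simp only [polar, map_add]
  ring

theorem exists_perm_apply_iff_lt_card {n : ℕ} (P : Fin n → Prop) [DecidablePred P] :
    ∃ σ : Equiv.Perm (Fin n), ∀ i, P (σ i) ↔ (i : ℕ) < #{i | P i} := by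
  set p := #{i | P i}
  have hp : p + (n - p) = n := Nat.add_sub_cancel' ((card_filter_le _ _).trans (by simp))
  let eP : Fin p ≃ {i // P i} := (Fintype.equivFinOfCardEq (Fintype.card_subtype P)).symm
  let eN : Fin (n - p) ≃ {i // ¬P i} := (Fintype.equivFinOfCardEq (by
    rw [Fintype.card_subtype_compl, Fintype.card_subtype, Fintype.card_fin])).symm
  let τ : Fin p ⊕ Fin (n - p) ≃ Fin n := finSumFinEquiv.trans (finCongr hp)
  refine ⟨τ.symm.trans ((eP.sumCongr eN).trans (Equiv.sumCompl P)), τ.surjective.forall.2 ?_⟩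
  rintro (a | b)
  · simp [τ, (eP a).2]
  · simp [τ, (eN b).2]

noncomputable def initLastEquiv (R : Type*) [Semiring R] (n : ℕ) :
    (Fin (n + 1) → R) ≃ₗ[R] (Fin n → R) × R where
  toFun x := (Fin.init x, x (Fin.last n))
  invFun p := Fin.snoc p.1 p.2
  map_add' x y := by ext <;> simp [Fin.init]
  map_smul' c x := by ext <;> simp [Fin.init]
  left_inv x := by simp
  right_inv p := by simp

def kerProdEquiv {K V : Type*} [Field K] [AddCommGroup V] [Module K V] (L : V →ₗ[K] K) {x : V}
    (hx : L x ≠ 0) : (LinearMap.ker L × K) ≃ₗ[K] V where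
  toFun p := p.1 + p.2 • x
  invFun y := (⟨y - (L y / L x) • x, by simp [hx]⟩, L y / L x)
  map_add' p q := by simp only [Prod.fst_add, Prod.snd_add, Submodule.coe_add, add_smul]; abel
  map_smul' c p := by simp [smul_add, smul_smul]
  left_inv p := by ext <;> simp [hx]
  right_inv y := by simp

theorem kerProdEquiv_apply {K V : Type*} [Field K] [AddCommGroup V] [Module K V]
    (L : V →ₗ[K] K) {x : V} (hx : L x ≠ 0) (p : LinearMap.ker L × K) :
    kerProdEquiv L hx p = p.1 + p.2 • x :=
  rfl

theorem eq_zero_of_polar_comp_ker_subtype_eq_zero {M : Type*} [AddCommGroup M] [Module ℝ M]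
    (Q : QuadraticForm ℝ M) (hQ : ∀ x, (∀ y, polar Q x y = 0) → x = 0) (L : M →ₗ[ℝ] ℝ)
    {x : M} (hLx : L x ≠ 0) (hx : ∀ y ∈ LinearMap.ker L, polar Q x y = 0) (v : LinearMap.ker L)
    (hv : ∀ u, polar (Q.comp (LinearMap.ker L).subtype) v u = 0) : v = 0 := by
  refine Subtype.ext (hQ v fun y => ?_)
  obtain ⟨⟨u, t⟩, rfl⟩ := (kerProdEquiv L hLx).surjective y
  rw [kerProdEquiv_apply, polar_add_right, polar_smul_right, polar_comm _ _ x,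
    hx v v.2, smul_zero, add_zero]
  exact hv u

theorem canL_succ (n : ℕ) (y : Fin (n + 1) → ℝ) : canL (n + 1) y = y (Fin.last n) := by
  simp [canL, Fin.last]

theorem canQI_succ_of_le {n s : ℕ} (hs : s ≤ n) (y : Fin (n + 1) → ℝ) :
    canQI (n + 1) s y = canQI n s (Fin.init y) - y (Fin.last n) ^ 2 := by
  have hns : ¬n < s := by omega
  simp [canQI, Fin.sum_univ_castSucc, Fin.init, hns, sub_eq_add_neg]

theorem canQI_zero (d : ℕ) (y : Fin d → ℝ) : canQI d 0 y = -canQI d d y := by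
  simp [canQI]

theorem polar_canQI_single_last (n s : ℕ) (y : Fin (n + 1) → ℝ) :
    polar (canQI (n + 1) s) (Pi.single (Fin.last n) 1) y
      = 2 * (if n < s then 1 else -1) * y (Fin.last n) := by
  simp only [polar, canQI, ← Finset.sum_sub_distrib]
  rw [Finset.sum_eq_single (Fin.last n)]
  · simp only [Pi.add_apply, Pi.single_eq_same, Fin.val_last]; ring
  · intro i _ hi
    simp [hi]
  · simp

theorem exists_linearEquiv_canQI {M : Type*} [AddCommGroup M] [Module ℝ M]
    [FiniteDimensional ℝ M] {n : ℕ} (hn : finrank ℝ M = n) (Q : QuadraticForm ℝ M)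
    (hQ : ∀ x, (∀ y, polar Q x y = 0) → x = 0) :
    ∃ p ≤ n, ∃ F : (Fin n → ℝ) ≃ₗ[ℝ] M, ∀ z, Q (F z) = canQI n p z := by
  subst hn
  obtain ⟨w, hw, ⟨f⟩⟩ :=
    Q.equivalent_one_neg_one_weighted_sum_squared ((separatingLeft_associated_iff Q).2 hQ)
  obtain ⟨σ, hσ⟩ := exists_perm_apply_iff_lt_card (fun i => w i = 1)
  refine ⟨#{i | w i = 1}, (card_le_univ _).trans_eq (Fintype.card_fin _),
    LinearEquiv.funCongrLeft ℝ ℝ σ.symm ≪≫ₗ f.toLinearEquiv.symm, fun z => ?_⟩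
  have hwσ : ∀ j, w (σ j) = if (j : ℕ) < #{i | w i = 1} then 1 else -1 := fun j => by
    split_ifs with hj
    · exact (hσ j).2 hj
    · exact (hw (σ j)).resolve_right fun h => hj ((hσ j).1 h)
  refine (f.symm.map_app _).trans ?_
  rw [weightedSumSquares_apply, canQI, ← Equiv.sum_comp σ]
  simp [hwσ, LinearEquiv.funCongrLeft_apply, _root_.sq]

theorem pairEquiv_of_forall_apply {d : ℕ} {Q₁ L₁ Q₂ L₂ : (Fin d → ℝ) → ℝ}
    (H : (Fin d → ℝ) ≃ₗ[ℝ] (Fin d → ℝ)) {lam mu : ℝ} (hlam : lam ≠ 0) (hmu : mu ≠ 0)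
    (hQ : ∀ y, Q₁ (H y) = lam * Q₂ y) (hL : ∀ y, L₁ (H y) = mu * L₂ y) :
    PairEquiv d Q₁ L₁ Q₂ L₂ :=
  ⟨lam, mu, H.symm, hlam, hmu, fun x => by
    simpa using And.intro (hQ (H.symm x)) (hL (H.symm x))⟩

theorem exists_polar_add_mul_sq_eq_zero_of_pairEquiv {n s : ℕ} {Q L : (Fin (n + 1) → ℝ) → ℝ}
    (h : PairEquiv (n + 1) Q L (canQI (n + 1) s) (canL (n + 1))) :
    ∃ α : ℝ, ∃ x ≠ 0, ∀ y, polar (fun z => Q z + α * L z ^ 2) x y = 0 := by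
  obtain ⟨lam, mu, g, -, hmu, hQL⟩ := h
  set e : Fin (n + 1) → ℝ := Pi.single (Fin.last n) 1
  set ε : ℝ := if n < s then 1 else -1
  refine ⟨-(lam * ε) / mu ^ 2, g.symm e, by simp [e], fun y => ?_⟩
  calc polar (fun z => Q z + -(lam * ε) / mu ^ 2 * L z ^ 2) (g.symm e) y
      = lam * polar (canQI (n + 1) s) e (g y)
          - lam * ε / mu ^ 2 * (2 * (mu * e (Fin.last n)) * (mu * g y (Fin.last n))) := by
        simp only [polar, hQL, map_add, LinearEquiv.apply_symm_apply, canL_succ, Pi.add_apply]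
        ring
    _ = 0 := by
        rw [polar_canQI_single_last]
        simp only [e, ε, Pi.single_eq_same]
        field_simp
        ring

theorem exists_pairEquiv_canQI_of_polar_ker_eq_zero {n : ℕ}
    (Q : QuadraticForm ℝ (Fin (n + 1) → ℝ)) (hQ : ∀ x, (∀ y, polar Q x y = 0) → x = 0)
    (L : (Fin (n + 1) → ℝ) →ₗ[ℝ] ℝ) {x : Fin (n + 1) → ℝ} (hLx : L x ≠ 0) (hQx : Q x ≠ 0)
    (hx : ∀ y ∈ LinearMap.ker L, polar Q x y = 0) :
    ∃ s, 1 ≤ s ∧ s ≤ n + 1 ∧ PairEquiv (n + 1) Q L (canQI (n + 1) s) (canL (n + 1)) := by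
  have hrank : finrank ℝ (LinearMap.ker L) = n := by
    have := Module.Dual.finrank_ker_add_one_of_ne_zero (f := L) fun h => hLx (by simp [h])
    simp only [finrank_fin_fun] at this
    omega
  -- rescaling by `-(Q x)⁻¹` gives `x` the coefficient `-1`, which `canQI` places last
  obtain ⟨p, hp, F, hF⟩ :=
    exists_linearEquiv_canQI hrank (-(Q x)⁻¹ • Q.comp (LinearMap.ker L).subtype) fun v hv =>
      eq_zero_of_polar_comp_ker_subtype_eq_zero Q hQ L hLx hx v fun u => by
        simpa [polar_neg, polar_smul, hQx] using hv u
  let H := initLastEquiv ℝ n ≪≫ₗ F.prodCongr (LinearEquiv.refl ℝ ℝ) ≪≫ₗ kerProdEquiv L hLx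
  have hQH : ∀ y, Q (H y) = -Q x * canQI (n + 1) p y := by
    intro y
    have hHy : H y = (F (Fin.init y) : Fin (n + 1) → ℝ) + y (Fin.last n) • x := rfl
    rw [hHy, QuadraticMap.map_add (⇑Q), polar_smul_right, polar_comm, hx _ (F _).2, smul_zero,
      add_zero, QuadraticMap.map_smul, canQI_succ_of_le hp, ← hF]
    simp only [smul_apply, QuadraticMap.comp_apply, Submodule.subtype_apply, smul_eq_mul]
    field_simp
    ring
  have hLH : ∀ y, L (H y) = L x * canL (n + 1) y := by
    intro y
    simp [H, kerProdEquiv_apply, initLastEquiv, canL_succ, mul_comm]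
  rcases Nat.eq_zero_or_pos p with rfl | hp0
  · exact ⟨n + 1, by omega, le_rfl,
      pairEquiv_of_forall_apply H hQx hLx (fun y => by simp [hQH, canQI_zero]) hLH⟩
  · exact ⟨p, hp0, by omega, pairEquiv_of_forall_apply H (neg_ne_zero.2 hQx) hLx hQH hLH⟩

theorem stmt_6_general (d : ℕ) (hd : 0 < d)
    (Q : QuadraticForm ℝ (Fin d → ℝ))
    (hQnd : ∀ x : Fin d → ℝ, (∀ y, QuadraticMap.polar Q x y = 0) → x = 0)
    (L : (Fin d → ℝ) →ₗ[ℝ] ℝ) :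
    (∃ s : ℕ, 1 ≤ s ∧ s ≤ d ∧ PairEquiv d (⇑Q) (⇑L) (canQI d s) (canL d)) ↔
      (∃ α : ℝ, ∃ x : Fin d → ℝ, x ≠ 0 ∧
        ∀ y, QuadraticMap.polar (fun z => Q z + α * (L z) ^ 2) x y = 0) := by
  obtain ⟨n, rfl⟩ : ∃ n, d = n + 1 := ⟨d - 1, by omega⟩
  refine ⟨fun ⟨s, _, _, h⟩ => exists_polar_add_mul_sq_eq_zero_of_pairEquiv h, ?_⟩
  rintro ⟨α, x, hx0, hx⟩
  have hrad : ∀ y, polar Q x y = -(2 * α * L x) * L y := fun y => by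
    linarith [polar_add_mul_sq (⇑Q) L α x y, hx y]
  have hα : α ≠ 0 := fun h => hx0 (hQnd x fun y => by simp [hrad, h])
  have hLx : L x ≠ 0 := fun h => hx0 (hQnd x fun y => by simp [hrad, h])
  have hQx : Q x = -α * L x ^ 2 := by
    linarith [hrad x, polar_self Q x, two_nsmul (Q x)]
  exact exists_pairEquiv_canQI_of_polar_ker_eq_zero Q hQnd L hLx (by simp [hQx, hα, hLx])
    fun y hy => by rw [hrad, LinearMap.mem_ker.1 hy, mul_zero]

/-- A pair `(Q, L)` (with `Q` nondegenerate, `L ≠ 0`) is of type (I) iff `Q + αL²` is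
degenerate for some `α ∈ ℝ`. -/
theorem stmt_6 (d : ℕ) (hd : 0 < d)
    (Q : QuadraticForm ℝ (Fin d → ℝ))
    (hQnd : ∀ x : Fin d → ℝ, (∀ y, QuadraticMap.polar Q x y = 0) → x = 0)
    (L : (Fin d → ℝ) →ₗ[ℝ] ℝ) (hL : L ≠ 0) :
    (∃ s : ℕ, 1 ≤ s ∧ s ≤ d ∧ PairEquiv d (⇑Q) (⇑L) (canQI d s) (canL d)) ↔
      (∃ α : ℝ, ∃ x : Fin d → ℝ, x ≠ 0 ∧
        ∀ y, QuadraticMap.polar (fun z => Q z + α * (L z) ^ 2) x y = 0) :=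
  stmt_6_general d hd Q hQnd L
end

section
/- If Q is a real quadratic form and L a nonzero linear form on ℝ^d such that Q + βL² is positive definite for some β ∈ ℝ, then (0,0) is not an accumulation point of {(Q(x), L(x)) : x ∈ ℤ^d \ {0}}; in particular the set {(Q(x), L(x)) : x ∈ ℤ^d} is not dense in ℝ². -/
open Filter Topology

/-!
The form `F = Q + β L²` is positive definite, so it is bounded below by `c ‖x‖²` for some
`c > 0`; nonzero integer vectors have sup norm at least `1`, hence `F ≥ c` on them. But
`F x = g (Q x, L x)` with `g (a, b) = a + β b²`, and `g < c` near the origin, so no nonzero integer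
vector maps near `(0, 0)`. The only other point of the full image is `(0, 0)` itself, and a set
that avoids a punctured neighbourhood of a non-isolated point is not dense.
-/

namespace QuadraticMap

variable {E : Type*} [NormedAddCommGroup E] [NormedSpace ℝ E] [FiniteDimensional ℝ E]

theorem continuous_of_finiteDimensional (Q : QuadraticForm ℝ E) : Continuous Q := by
  have hB := (associated (R := ℝ) Q).toContinuousBilinearMap.continuous₂
  convert hB.comp (continuous_id.prodMk continuous_id) using 1
  ext x
  exact (associated_eq_self_apply ℝ Q x).symm

theorem PosDef.exists_pos_mul_sq_norm_le {Q : QuadraticForm ℝ E} (hQ : Q.PosDef) :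
    ∃ c > 0, ∀ x, c * ‖x‖ ^ 2 ≤ Q x := by
  cases subsingleton_or_nontrivial E
  · exact ⟨1, one_pos, fun x => by simp [Subsingleton.elim x 0]⟩
  obtain ⟨u, hu, hmin⟩ := (isCompact_sphere (0 : E) 1).exists_isMinOn
    (NormedSpace.sphere_nonempty.2 zero_le_one) Q.continuous_of_finiteDimensional.continuousOn
  have hu1 : ‖u‖ = 1 := by simpa using hu
  refine ⟨Q u, hQ u (norm_ne_zero_iff.1 (by simp [hu1])), fun x => ?_⟩
  rcases eq_or_ne x 0 with rfl | hx
  · simp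
  have hx' : ‖x‖ ≠ 0 := norm_ne_zero_iff.2 hx
  have hunit : ‖x‖⁻¹ • x ∈ Metric.sphere (0 : E) 1 := by
    simp [norm_smul, hx']
  calc Q u * ‖x‖ ^ 2 ≤ Q (‖x‖⁻¹ • x) * ‖x‖ ^ 2 := by gcongr; exact hmin hunit
    _ = Q x := by rw [QuadraticMap.map_smul, smul_eq_mul]; field_simp

end QuadraticMap

theorem one_le_norm_intCast_of_ne_zero {ι : Type*} [Fintype ι] {x : ι → ℤ} (hx : x ≠ 0) :
    1 ≤ ‖fun i => (x i : ℝ)‖ := by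
  obtain ⟨i, hi⟩ := Function.ne_iff.1 hx
  calc (1 : ℝ) ≤ |(x i : ℝ)| := by exact_mod_cast Int.one_le_abs hi
    _ ≤ ‖fun i => (x i : ℝ)‖ := norm_le_pi_norm (fun i => (x i : ℝ)) i

theorem QuadraticMap.PosDef.exists_pos_le_intCast {ι : Type*} [Fintype ι]
    {Q : QuadraticForm ℝ (ι → ℝ)} (hQ : Q.PosDef) :
    ∃ c > 0, ∀ x : ι → ℤ, x ≠ 0 → c ≤ Q (fun i => (x i : ℝ)) := by
  obtain ⟨c, hc, hcQ⟩ := hQ.exists_pos_mul_sq_norm_le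
  refine ⟨c, hc, fun x hx => le_trans ?_ (hcQ _)⟩
  exact le_mul_of_one_le_right hc.le (one_le_pow₀ (one_le_norm_intCast_of_ne_zero hx))

theorem not_accPt_of_le_of_continuousAt {X : Type*} [TopologicalSpace X] {g : X → ℝ} {p : X}
    {S : Set X} {c : ℝ} (hg : ContinuousAt g p) (hp : g p < c) (hS : ∀ y ∈ S, c ≤ g y) :
    ¬ AccPt p (𝓟 S) := by
  rw [accPt_iff_nhds]
  intro h
  obtain ⟨y, ⟨hyU, hyS⟩, -⟩ := h _ (hg (Iio_mem_nhds hp))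
  exact (hS y hyS).not_gt hyU

theorem not_dense_of_subset_insert {X : Type*} [TopologicalSpace X] [T1Space X] {p : X}
    [(𝓝[≠] p).NeBot] {S T : Set X} (hST : S ⊆ insert p T) (hT : ¬ AccPt p (𝓟 T)) :
    ¬ Dense S := by
  intro hS
  apply hT
  have hSp : p ∈ closure (S \ {p}) := by simp [(hS.sdiff_singleton p).closure_eq]
  rw [accPt_principal_iff_clusterPt]
  refine (mem_closure_iff_clusterPt.1 hSp).mono (principal_mono.2 ?_)
  exact fun y ⟨hyS, hyp⟩ => ⟨(hST hyS).resolve_left hyp, hyp⟩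

theorem stmt_7_general (d : ℕ)
    (Q : QuadraticForm ℝ (Fin d → ℝ))
    (L : (Fin d → ℝ) →ₗ[ℝ] ℝ)
    (β : ℝ)
    (hpos : ∀ x : Fin d → ℝ, x ≠ 0 → 0 < Q x + β * (L x) ^ 2) :
    ¬ AccPt ((0 : ℝ), (0 : ℝ))
        (𝓟 {p : ℝ × ℝ | ∃ x : Fin d → ℤ, x ≠ 0 ∧
          p = (Q (fun i => (x i : ℝ)), L (fun i => (x i : ℝ)))}) ∧
    ¬ Dense {p : ℝ × ℝ | ∃ x : Fin d → ℤ,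
          p = (Q (fun i => (x i : ℝ)), L (fun i => (x i : ℝ)))} := by
  set F : QuadraticForm ℝ (Fin d → ℝ) := Q + β • QuadraticMap.sq.comp L
  have hF : ∀ x, F x = Q x + β * L x ^ 2 := fun x => by simp [F, sq]
  obtain ⟨c, hc, hcF⟩ := QuadraticMap.PosDef.exists_pos_le_intCast (Q := F)
    fun x hx => (hF x).symm ▸ hpos x hx
  refine ⟨?acc, not_dense_of_subset_insert ?_ ?acc⟩
  · refine not_accPt_of_le_of_continuousAt (g := fun p : ℝ × ℝ => p.1 + β * p.2 ^ 2) (c := c)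
      (by fun_prop) (by simpa using hc) ?_
    rintro _ ⟨x, hx, rfl⟩
    exact (hF _).symm ▸ hcF x hx
  · rintro _ ⟨x, rfl⟩
    rcases eq_or_ne x 0 with rfl | hx
    · left; simp [← Pi.zero_def]
    · exact Or.inr ⟨x, hx, rfl⟩

/-- If `Q + βL²` is positive definite for some `β`, then `(0,0)` is not an accumulation
point of `{(Q(x), L(x)) : x ∈ ℤ^d, x ≠ 0}`, and `{(Q(x), L(x)) : x ∈ ℤ^d}` is not dense
in `ℝ²`. -/
theorem stmt_7 (d : ℕ)
    (Q : QuadraticForm ℝ (Fin d → ℝ))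
    (L : (Fin d → ℝ) →ₗ[ℝ] ℝ) (hL : L ≠ 0)
    (β : ℝ)
    (hpos : ∀ x : Fin d → ℝ, x ≠ 0 → 0 < Q x + β * (L x) ^ 2) :
    ¬ AccPt ((0 : ℝ), (0 : ℝ))
        (𝓟 {p : ℝ × ℝ | ∃ x : Fin d → ℤ, x ≠ 0 ∧
          p = (Q (fun i => (x i : ℝ)), L (fun i => (x i : ℝ)))}) ∧
    ¬ Dense {p : ℝ × ℝ | ∃ x : Fin d → ℤ,
          p = (Q (fun i => (x i : ℝ)), L (fun i => (x i : ℝ)))} :=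
  stmt_7_general d Q L β hpos
end

section
/- The normalizer in 𝔰𝔩(4,ℂ) of the Lie algebra 𝔥 spanned by the two matrices E₁ with rows (0,1,0,0),(0,0,0,0),(0,0,0,1),(0,0,0,0) and E₂ with rows (0,0,1,0),(0,0,0,1),(0,0,0,0),(0,0,0,0) equals the set of matrices with rows (u,x,y,t),(0,v,0,y),(0,0,−v,x),(0,0,0,−u) for u,v,x,y,t ∈ ℂ. -/
/-- Basis element `E₁` of the Lie algebra `𝔥`. -/
def E1 : Matrix (Fin 4) (Fin 4) ℂ :=
  !![0, 1, 0, 0;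
     0, 0, 0, 0;
     0, 0, 0, 1;
     0, 0, 0, 0]

/-- Basis element `E₂` of the Lie algebra `𝔥`. -/
def E2 : Matrix (Fin 4) (Fin 4) ℂ :=
  !![0, 0, 1, 0;
     0, 0, 0, 1;
     0, 0, 0, 0;
     0, 0, 0, 0]

/-- Eta expansion for 4×4 complex matrices. -/
lemma eta_fin_four' (A : Matrix (Fin 4) (Fin 4) ℂ) :
    A = !![A 0 0, A 0 1, A 0 2, A 0 3;
           A 1 0, A 1 1, A 1 2, A 1 3;
           A 2 0, A 2 1, A 2 2, A 2 3;
           A 3 0, A 3 1, A 3 2, A 3 3] := by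
  ext i j
  fin_cases i <;> fin_cases j <;> rfl

/-- The normalizer of `𝔥 = ⟨E₁, E₂⟩` in `𝔰𝔩(4,ℂ)` consists exactly of the matrices
with rows `(u,x,y,t),(0,v,0,y),(0,0,−v,x),(0,0,0,−u)`. -/
theorem stmt_11 (X : Matrix (Fin 4) (Fin 4) ℂ) (htr : X.trace = 0) :
    (X * E1 - E1 * X ∈ Submodule.span ℂ {E1, E2} ∧
     X * E2 - E2 * X ∈ Submodule.span ℂ {E1, E2}) ↔
    ∃ u v x y t : ℂ, X =
      !![u, x, y, t;
         0, v, 0, y;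
         0, 0, -v, x;
         0, 0, 0, -u] := by
  have htr' : X 0 0 + X 1 1 + X 2 2 + X 3 3 = 0 := by
    simpa [Matrix.trace, Matrix.diag, Fin.sum_univ_four] using htr
  constructor
  · rintro ⟨h1, h2⟩
    rw [Submodule.mem_span_pair] at h1 h2
    obtain ⟨a, b, hab⟩ := h1
    obtain ⟨c, d, hcd⟩ := h2
    have h100 := congrFun (congrFun hab 0) 0
    have h101 := congrFun (congrFun hab 0) 1
    have h102 := congrFun (congrFun hab 0) 2
    have h103 := congrFun (congrFun hab 0) 3
    have h113 := congrFun (congrFun hab 1) 3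
    have h120 := congrFun (congrFun hab 2) 0
    have h121 := congrFun (congrFun hab 2) 1
    have h122 := congrFun (congrFun hab 2) 2
    have h123 := congrFun (congrFun hab 2) 3
    have h201 := congrFun (congrFun hcd 0) 1
    have h211 := congrFun (congrFun hcd 1) 1
    have h203 := congrFun (congrFun hcd 0) 3
    have h223 := congrFun (congrFun hcd 2) 3
    simp only [E1, E2, Matrix.add_apply, Matrix.sub_apply, Matrix.smul_apply, Matrix.mul_apply,
      Fin.sum_univ_four, smul_eq_mul, Matrix.of_apply, Matrix.cons_val', Matrix.cons_val_zero,
      Matrix.cons_val_one, Matrix.head_cons, Matrix.empty_val', Matrix.cons_val_fin_one,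
      Matrix.head_fin_const, Matrix.cons_val_two, Matrix.tail_cons, Matrix.cons_val_three,
      mul_zero, mul_one, zero_mul, one_mul, add_zero, zero_add, sub_zero, zero_sub] at h100 h101 h102 h103 h113 h120 h121 h122 h123 h201 h211 h203 h223
    refine ⟨X 0 0, X 1 1, X 0 1, X 0 2, X 0 3, ?_⟩
    have e10 : X 1 0 = 0 := by linear_combination h100
    have e12 : X 1 2 = 0 := by linear_combination (h102 - h113)/2
    have e13 : X 1 3 = X 0 2 := by linear_combination h103
    have e31 : X 3 1 = 0 := by linear_combination h211
    have e20 : X 2 0 = 0 := by linear_combination h211 - h121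
    have e21 : X 2 1 = 0 := by linear_combination (h201 - h223)/2
    have e22 : X 2 2 = -X 1 1 := by linear_combination (htr' + h101 - h123)/2
    have e23 : X 2 3 = X 0 1 := by linear_combination h203
    have e30 : X 3 0 = 0 := by linear_combination h120
    have e32 : X 3 2 = 0 := by linear_combination h122
    have e33 : X 3 3 = -X 0 0 := by linear_combination (htr' - h101 + h123)/2
    conv_lhs => rw [eta_fin_four' X]
    rw [e10, e12, e13, e20, e21, e22, e23, e30, e31, e32, e33]
  · rintro ⟨u, v, x, y, t, rfl⟩
    rw [Submodule.mem_span_pair, Submodule.mem_span_pair]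
    refine ⟨⟨u - v, 0, ?_⟩, ⟨0, u + v, ?_⟩⟩ <;>
    · rw [eta_fin_four' (_ • E1 + _ • E2), eta_fin_four' (_ * _ - _ * _)]
      simp only [E1, E2, Matrix.add_apply, Matrix.sub_apply, Matrix.smul_apply, Matrix.mul_apply,
        Fin.sum_univ_four, smul_eq_mul, Matrix.of_apply, Matrix.cons_val', Matrix.cons_val_zero,
        Matrix.cons_val_one, Matrix.head_cons, Matrix.empty_val', Matrix.cons_val_fin_one,
        Matrix.head_fin_const, Matrix.cons_val_two, Matrix.tail_cons, Matrix.cons_val_three,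
        mul_zero, mul_one, zero_mul, one_mul, add_zero, zero_add, sub_zero, zero_sub, sub_self,
        neg_zero, neg_neg, mul_neg, neg_mul, sub_neg_eq_add]
      ring_nf
end

section
/- Let c be an element of SL(4,ℂ) commuting with every element of the unipotent group H (with rows (1,a,b,ab),(0,1,0,b),(0,0,1,a),(0,0,0,1)). Then c has a unique eigenvalue λ, i.e. c = λ·c₀ with c₀ unipotent. -/
/-- The unipotent matrices `h(a,b)`. -/
def hMat (a b : ℂ) : Matrix (Fin 4) (Fin 4) ℂ :=
  !![1, a, b, a * b;
     0, 1, 0, b;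
     0, 0, 1, a;
     0, 0, 0, 1]

private lemma nilp_aux (p q r : ℂ) :
    (!![0, p, q, r; 0, 0, 0, q; 0, 0, 0, p; 0, 0, 0, 0] : Matrix (Fin 4) (Fin 4) ℂ) ^ 4 = 0 := by
  have hsq : (!![0, p, q, r; 0, 0, 0, q; 0, 0, 0, p; 0, 0, 0, 0] : Matrix (Fin 4) (Fin 4) ℂ) ^ 2
      = !![0, 0, 0, p * q + q * p; 0, 0, 0, 0; 0, 0, 0, 0; 0, 0, 0, 0] := by
    rw [sq]
    ext i j
    fin_cases i <;> fin_cases j <;>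
      simp [Matrix.mul_apply, Fin.sum_univ_four, Matrix.vecHead, Matrix.vecTail]
  have h4 : (!![0, p, q, r; 0, 0, 0, q; 0, 0, 0, p; 0, 0, 0, 0] : Matrix (Fin 4) (Fin 4) ℂ) ^ 4
      = (!![0, p, q, r; 0, 0, 0, q; 0, 0, 0, p; 0, 0, 0, 0] : Matrix (Fin 4) (Fin 4) ℂ) ^ 2
        * (!![0, p, q, r; 0, 0, 0, q; 0, 0, 0, p; 0, 0, 0, 0] : Matrix (Fin 4) (Fin 4) ℂ) ^ 2 := by
    rw [← pow_add]
  rw [h4, hsq]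
  ext i j
  fin_cases i <;> fin_cases j <;>
    simp [Matrix.mul_apply, Fin.sum_univ_four, Matrix.vecHead, Matrix.vecTail]

/-- Any `c ∈ SL(4,ℂ)` commuting with every element of `H` has a unique eigenvalue `λ`,
i.e. `c = λ·c₀` with `c₀` unipotent (equivalently `(c − λ·1)⁴ = 0`). -/
theorem stmt_13 (c : Matrix.SpecialLinearGroup (Fin 4) ℂ)
    (hcomm : ∀ a b : ℂ, (c : Matrix (Fin 4) (Fin 4) ℂ) * hMat a b
      = hMat a b * (c : Matrix (Fin 4) (Fin 4) ℂ)) :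
    ∃ lam : ℂ, lam ≠ 0 ∧
      ((c : Matrix (Fin 4) (Fin 4) ℂ) - lam • (1 : Matrix (Fin 4) (Fin 4) ℂ)) ^ 4 = 0 := by
  set M : Matrix (Fin 4) (Fin 4) ℂ := (c : Matrix (Fin 4) (Fin 4) ℂ) with hM
  have h1 := hcomm 1 0
  have e01 := congrFun (congrFun h1 0) 1
  have e03 := congrFun (congrFun h1 0) 3
  have e23 := congrFun (congrFun h1 2) 3
  have e11 := congrFun (congrFun h1 1) 1
  have e13 := congrFun (congrFun h1 1) 3
  have e31 := congrFun (congrFun h1 3) 1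
  have e33 := congrFun (congrFun h1 3) 3
  have h2 := hcomm 0 1
  have f02 := congrFun (congrFun h2 0) 2
  have f03 := congrFun (congrFun h2 0) 3
  have f22 := congrFun (congrFun h2 2) 2
  have f23 := congrFun (congrFun h2 2) 3
  have f33 := congrFun (congrFun h2 3) 3
  simp [hMat, Matrix.mul_apply, Fin.sum_univ_four, Matrix.vecHead, Matrix.vecTail]
    at e01 e03 e23 e11 e13 e31 e33 f02 f03 f22 f23 f33
  -- derived entry facts
  have h11 : M 1 1 = M 0 0 := by linear_combination -e01
  have h22 : M 2 2 = M 0 0 := by linear_combination -f02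
  have h33 : M 3 3 = M 0 0 := by linear_combination -f02 - e23
  have h13 : M 1 3 = M 0 2 := by linear_combination -e03
  have h23 : M 2 3 = M 0 1 := by linear_combination -f03
  have Mexp : M = !![M 0 0, M 0 1, M 0 2, M 0 3;
      0, M 0 0, 0, M 0 2;
      0, 0, M 0 0, M 0 1;
      0, 0, 0, M 0 0] := by
    ext i j
    fin_cases i <;> fin_cases j <;>
      simp [h11, h22, h33, h13, h23, e11, e13, e31, e33, f22, f23, f33,
        Matrix.vecHead, Matrix.vecTail]
  have hdet : M.det = 1 := c.2
  rw [Mexp] at hdet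
  simp [Matrix.det_succ_row_zero, Fin.sum_univ_succ, Matrix.vecHead, Matrix.vecTail] at hdet
  refine ⟨M 0 0, ?_, ?_⟩
  · intro h
    rw [h] at hdet
    simp at hdet
  · have hsub : M - M 0 0 • (1 : Matrix (Fin 4) (Fin 4) ℂ)
        = !![0, M 0 1, M 0 2, M 0 3; 0, 0, 0, M 0 2; 0, 0, 0, M 0 1; 0, 0, 0, 0] := by
      rw [Mexp]
      ext i j
      fin_cases i <;> fin_cases j <;>
        simp [Matrix.one_apply, Matrix.sub_apply, Matrix.vecHead, Matrix.vecTail]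
    rw [hsub]
    exact nilp_aux (M 0 1) (M 0 2) (M 0 3)
end

section
/- Let S be a quadratic form on ℂ⁴ = V ⊕ W with dim V = dim W = 2, invariant under the group F = {block matrix [[g, λg],[0, g]] : g ∈ SL(2,ℂ), λ ∈ ℂ} (with respect to the decomposition V ⊕ W identified with ℂ² ⊕ ℂ²). Then S is unique up to a scalar multiple; explicitly, the matrix of S is [[0, X],[Xᵗ, 0]] with X = u·[[0,−1],[1,0]] for some u ∈ ℂ. -/
open QuadraticMap


/-- A quadratic form `S` on `ℂ⁴ = ℂ² ⊕ ℂ²` invariant under the group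
`F = {[[g, λg],[0,g]] : g ∈ SL(2,ℂ), λ ∈ ℂ}` is, up to a scalar multiple, the form with
matrix `[[0, X],[Xᵗ, 0]]`, `X = u·[[0,−1],[1,0]]`; explicitly `S(v,w) = c(v₁w₂ − v₂w₁)`. -/
theorem stmt_14 (S : QuadraticForm ℂ ((Fin 2 → ℂ) × (Fin 2 → ℂ)))
    (hinv : ∀ (g : Matrix.SpecialLinearGroup (Fin 2) ℂ) (lam : ℂ)
        (p : (Fin 2 → ℂ) × (Fin 2 → ℂ)),
      S ((g : Matrix (Fin 2) (Fin 2) ℂ).mulVec p.1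
            + lam • (g : Matrix (Fin 2) (Fin 2) ℂ).mulVec p.2,
         (g : Matrix (Fin 2) (Fin 2) ℂ).mulVec p.2) = S p) :
    ∃ c : ℂ, ∀ v w : Fin 2 → ℂ, S (v, w) = c * (v 0 * w 1 - v 1 * w 0) := by
  have h1 : ∀ (lam : ℂ) (v w : Fin 2 → ℂ), S (v + lam • w, w) = S (v, w) := by
    intro lam v w
    simpa using hinv 1 lam (v, w)
  -- key identity from shears
  have key : ∀ (lam : ℂ) (w : Fin 2 → ℂ),
      lam * lam * S (w, (0 : Fin 2 → ℂ)) +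
        lam * polar S (w, (0 : Fin 2 → ℂ)) ((0 : Fin 2 → ℂ), w) = 0 := by
    intro lam w
    have h := h1 lam 0 w
    have e : ((0 : Fin 2 → ℂ) + lam • w, w)
        = lam • ((w, (0 : Fin 2 → ℂ)) : _) + (((0 : Fin 2 → ℂ), w) : _) := by
      simp [Prod.ext_iff]
    rw [e, QuadraticMap.map_add ⇑S _ _, QuadraticMap.map_smul, QuadraticMap.polar_smul_left,
      smul_eq_mul, smul_eq_mul] at h
    linear_combination h
  have hA : ∀ w : Fin 2 → ℂ, S (w, (0 : Fin 2 → ℂ)) = 0 := by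
    intro w
    linear_combination (key 1 w) / 2 + (key (-1) w) / 2
  have hP : ∀ w : Fin 2 → ℂ, polar S (w, (0 : Fin 2 → ℂ)) ((0 : Fin 2 → ℂ), w) = 0 := by
    intro w
    linear_combination (key 1 w) / 2 - (key (-1) w) / 2
  -- SL2 invariance of w ↦ S(0,w)
  have hg : ∀ (g : Matrix.SpecialLinearGroup (Fin 2) ℂ) (w : Fin 2 → ℂ),
      S ((0 : Fin 2 → ℂ), (g : Matrix (Fin 2) (Fin 2) ℂ).mulVec w) = S (0, w) := by
    intro g w
    simpa using hinv g 0 (0, w)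
  set e0 : Fin 2 → ℂ := ![1, 0] with he0
  set e1 : Fin 2 → ℂ := ![0, 1] with he1
  have g2 : Matrix.SpecialLinearGroup (Fin 2) ℂ :=
    ⟨!![2, 0; 0, (1 : ℂ)/2], by norm_num [Matrix.det_fin_two_of]⟩
  have hB0 : S ((0 : Fin 2 → ℂ), e0) = 0 := by
    have h := hg ⟨!![2, 0; 0, (1 : ℂ)/2], by norm_num [Matrix.det_fin_two_of]⟩ e0
    have e : (!![2, 0; 0, (1 : ℂ)/2]).mulVec e0 = (2 : ℂ) • e0 := by
      funext i; fin_cases i <;> simp [Matrix.mulVec, dotProduct, Fin.sum_univ_two, he0]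
    rw [show ((⟨!![2, 0; 0, (1 : ℂ)/2], by norm_num [Matrix.det_fin_two_of]⟩ :
        Matrix.SpecialLinearGroup (Fin 2) ℂ) : Matrix (Fin 2) (Fin 2) ℂ) = !![2, 0; 0, (1:ℂ)/2] from rfl,
      e] at h
    have e2 : ((0 : Fin 2 → ℂ), (2 : ℂ) • e0) = (2 : ℂ) • (((0 : Fin 2 → ℂ), e0) : _) := by
      simp [Prod.ext_iff]
    rw [e2, QuadraticMap.map_smul, smul_eq_mul] at h
    linear_combination h / 3
  have hB1 : S ((0 : Fin 2 → ℂ), e1) = 0 := by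
    have h := hg ⟨!![2, 0; 0, (1 : ℂ)/2], by norm_num [Matrix.det_fin_two_of]⟩ e1
    have e : (!![2, 0; 0, (1 : ℂ)/2]).mulVec e1 = ((1 : ℂ)/2) • e1 := by
      funext i; fin_cases i <;> simp [Matrix.mulVec, dotProduct, Fin.sum_univ_two, he1]
    rw [show ((⟨!![2, 0; 0, (1 : ℂ)/2], by norm_num [Matrix.det_fin_two_of]⟩ :
        Matrix.SpecialLinearGroup (Fin 2) ℂ) : Matrix (Fin 2) (Fin 2) ℂ) = !![2, 0; 0, (1:ℂ)/2] from rfl,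
      e] at h
    have e2 : ((0 : Fin 2 → ℂ), ((1:ℂ)/2) • e1) = ((1:ℂ)/2) • (((0 : Fin 2 → ℂ), e1) : _) := by
      simp [Prod.ext_iff]
    rw [e2, QuadraticMap.map_smul, smul_eq_mul] at h
    linear_combination -(4/3 : ℂ) * h
  have hBpol : polar S ((0 : Fin 2 → ℂ), e0) ((0 : Fin 2 → ℂ), e1) = 0 := by
    have h := hg ⟨!![1, 0; 1, (1 : ℂ)], by norm_num [Matrix.det_fin_two_of]⟩ e0
    have e : (!![1, 0; 1, (1 : ℂ)]).mulVec e0 = e0 + e1 := by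
      funext i; fin_cases i <;> simp [Matrix.mulVec, dotProduct, Fin.sum_univ_two, he0, he1]
    rw [show ((⟨!![1, 0; 1, (1 : ℂ)], by norm_num [Matrix.det_fin_two_of]⟩ :
        Matrix.SpecialLinearGroup (Fin 2) ℂ) : Matrix (Fin 2) (Fin 2) ℂ) = !![1, 0; 1, (1:ℂ)] from rfl,
      e] at h
    have e2 : ((0 : Fin 2 → ℂ), e0 + e1)
        = (((0 : Fin 2 → ℂ), e0) : _) + (((0 : Fin 2 → ℂ), e1) : _) := by
      simp [Prod.ext_iff]
    rw [e2, QuadraticMap.map_add ⇑S _ _, hB0, hB1] at h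
    linear_combination h
  have hdecomp : ∀ v : Fin 2 → ℂ, v = v 0 • e0 + v 1 • e1 := by
    intro v; funext i; fin_cases i <;> simp [he0, he1]
  have hB : ∀ w : Fin 2 → ℂ, S ((0 : Fin 2 → ℂ), w) = 0 := by
    intro w
    have e : ((0 : Fin 2 → ℂ), w)
        = w 0 • (((0 : Fin 2 → ℂ), e0) : (Fin 2 → ℂ) × (Fin 2 → ℂ))
          + w 1 • (((0 : Fin 2 → ℂ), e1) : (Fin 2 → ℂ) × (Fin 2 → ℂ)) := by
      refine Prod.ext (by simp) ?_
      simpa using hdecomp w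
    rw [e, QuadraticMap.map_add ⇑S _ _, QuadraticMap.map_smul, QuadraticMap.map_smul,
      QuadraticMap.polar_smul_left, QuadraticMap.polar_smul_right, hB0, hB1, hBpol]
    simp
  refine ⟨polar S ((e0, (0 : Fin 2 → ℂ)) : (Fin 2 → ℂ) × (Fin 2 → ℂ))
      (((0 : Fin 2 → ℂ), e1) : (Fin 2 → ℂ) × (Fin 2 → ℂ)), ?_⟩
  intro v w
  have e : ((v, w) : (Fin 2 → ℂ) × (Fin 2 → ℂ))
      = ((v, (0 : Fin 2 → ℂ)) : (Fin 2 → ℂ) × (Fin 2 → ℂ))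
        + (((0 : Fin 2 → ℂ), w) : (Fin 2 → ℂ) × (Fin 2 → ℂ)) := by simp
  have ev : ((v, (0 : Fin 2 → ℂ)) : (Fin 2 → ℂ) × (Fin 2 → ℂ))
      = v 0 • ((e0, (0 : Fin 2 → ℂ)) : (Fin 2 → ℂ) × (Fin 2 → ℂ))
        + v 1 • ((e1, (0 : Fin 2 → ℂ)) : (Fin 2 → ℂ) × (Fin 2 → ℂ)) := by
    refine Prod.ext ?_ (by simp)
    simpa using hdecomp v
  have ew : (((0 : Fin 2 → ℂ), w) : (Fin 2 → ℂ) × (Fin 2 → ℂ))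
      = w 0 • (((0 : Fin 2 → ℂ), e0) : (Fin 2 → ℂ) × (Fin 2 → ℂ))
        + w 1 • (((0 : Fin 2 → ℂ), e1) : (Fin 2 → ℂ) × (Fin 2 → ℂ)) := by
    refine Prod.ext (by simp) ?_
    simpa using hdecomp w
  rw [e, QuadraticMap.map_add ⇑S _ _, hA v, hB w, ev, ew]
  simp only [QuadraticMap.polar_add_left, QuadraticMap.polar_add_right,
    QuadraticMap.polar_smul_left, QuadraticMap.polar_smul_right, smul_eq_mul]
  -- alternating relations
  have a0 := hP e0
  have a1 := hP e1
  have a01 : polar S ((e0, (0 : Fin 2 → ℂ)) : (Fin 2 → ℂ) × (Fin 2 → ℂ)) (0, e1)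
      + polar S ((e1, (0 : Fin 2 → ℂ)) : (Fin 2 → ℂ) × (Fin 2 → ℂ)) (0, e0) = 0 := by
    have h := hP (e0 + e1)
    have e1' : ((e0 + e1, (0 : Fin 2 → ℂ)) : (Fin 2 → ℂ) × (Fin 2 → ℂ))
        = ((e0, (0 : Fin 2 → ℂ)) : (Fin 2 → ℂ) × (Fin 2 → ℂ))
          + ((e1, (0 : Fin 2 → ℂ)) : (Fin 2 → ℂ) × (Fin 2 → ℂ)) := by simp
    have e2' : (((0 : Fin 2 → ℂ), e0 + e1) : (Fin 2 → ℂ) × (Fin 2 → ℂ))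
        = (((0 : Fin 2 → ℂ), e0) : (Fin 2 → ℂ) × (Fin 2 → ℂ))
          + (((0 : Fin 2 → ℂ), e1) : (Fin 2 → ℂ) × (Fin 2 → ℂ)) := by simp
    rw [e1', e2', QuadraticMap.polar_add_left, QuadraticMap.polar_add_right,
      QuadraticMap.polar_add_right, a0, a1] at h
    linear_combination h
  linear_combination (v 0 * w 0) * a0 + (v 1 * w 1) * a1 + (v 1 * w 0) * a01
end

section
/- Let Q be a nondegenerate quadratic form on ℝ^d, and suppose ℝ^d = V ⊕ W with Q(v + w) = Q(v) + Q(w) for v ∈ V, w ∈ W (V and W are Q-orthogonal), Q|_V is indefinite and dim V ≥ 2. Then for every x = x₁ + x₂ with x₁ ∈ V, x₁ ≠ 0, x₂ ∈ W, and every a ∈ ℝ, there exists f ∈ SL(V) (extended by identity on W) such that Q(f x₁ + x₂) = a. -/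
open QuadraticMap Matrix

/-- Determinant of a shear `id + φ ⊗ y` with `φ y = 0` is `1`. -/
lemma det_shear {d : ℕ} (φ : (Fin d → ℝ) →ₗ[ℝ] ℝ) (y : Fin d → ℝ) (hy : φ y = 0) :
    LinearMap.det (LinearMap.id + φ.smulRight y) = 1 := by
  have hM : LinearMap.toMatrix' (LinearMap.id + φ.smulRight y)
      = 1 + Matrix.replicateCol (Fin 1) y *
          Matrix.replicateRow (Fin 1) (fun j => φ (fun j' => if j' = j then 1 else 0)) := by
    ext i j
    have e : (Pi.single j (1:ℝ) : Fin d → ℝ) = fun j' => if j' = j then 1 else 0 :=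
      funext fun j' => Pi.single_apply j 1 j'
    simp [LinearMap.toMatrix'_apply, Matrix.one_apply, Matrix.mul_apply, mul_comm, e]
  rw [← LinearMap.det_toMatrix', hM]
  refine (Matrix.det_one_add_replicateCol_mul_replicateRow (ι := Fin 1) y _).trans ?_
  have : (fun j => φ (fun j' => if j' = j then 1 else 0)) ⬝ᵥ y = φ y := by
    rw [LinearMap.pi_apply_eq_sum_univ φ y, dotProduct]
    refine Finset.sum_congr rfl (fun i _ => ?_)
    rw [smul_eq_mul, mul_comm]
    congr 2
    ext j'
    simp [eq_comm]
  rw [this, hy, add_zero]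

/-- If `ℝ^d = V ⊕ W` is a `Q`-orthogonal decomposition with `Q|_V` indefinite and
`dim V ≥ 2`, then for any `x = x₁ + x₂` with `0 ≠ x₁ ∈ V`, `x₂ ∈ W`, and any `a ∈ ℝ`,
there is `f ∈ SL(V)` (extended by the identity on `W`) with `Q(f x₁ + x₂) = a`. -/
theorem stmt_15 (d : ℕ)
    (Q : QuadraticForm ℝ (Fin d → ℝ))
    (hQnd : ∀ x : Fin d → ℝ, (∀ y, QuadraticMap.polar Q x y = 0) → x = 0)
    (V W : Submodule ℝ (Fin d → ℝ)) (hcompl : IsCompl V W)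
    (horth : ∀ v ∈ V, ∀ w ∈ W, Q (v + w) = Q v + Q w)
    (hindef : (∃ v ∈ V, 0 < Q v) ∧ (∃ v ∈ V, Q v < 0))
    (hdim : 2 ≤ Module.finrank ℝ V) :
    ∀ x₁ ∈ V, x₁ ≠ 0 → ∀ x₂ ∈ W, ∀ a : ℝ,
      ∃ f : (Fin d → ℝ) →ₗ[ℝ] (Fin d → ℝ),
        (∀ v ∈ V, f v ∈ V) ∧ (∀ w ∈ W, f w = w) ∧
        LinearMap.det f = 1 ∧
        Q (f x₁ + x₂) = a := by
  intro x₁ hx₁V hx₁0 x₂ hx₂ a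
  -- basic polar identities
  have hVW : ∀ v ∈ V, ∀ w ∈ W, polar Q v w = 0 := by
    intro v hv w hw
    simp [QuadraticMap.polar, horth v hv w hw]
  have hpc : ∀ x y : Fin d → ℝ, polar Q x y = polar Q y x := by
    intro x y; simp only [QuadraticMap.polar]; rw [add_comm x y]; ring
  have hexp : ∀ x y : Fin d → ℝ, Q (x + y) = Q x + Q y + polar Q x y := by
    intro x y; simp [QuadraticMap.polar]
  have hsm : ∀ (t : ℝ) (x : Fin d → ℝ), Q (t • x) = t ^ 2 * Q x := by
    intro t x; rw [QuadraticMap.map_smul, smul_eq_mul]; ring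
  have hps : ∀ x : Fin d → ℝ, polar Q x x = 2 * Q x := by
    intro x; rw [polar_self]; push_cast [nsmul_eq_mul]; ring
  have hpsr : ∀ (t : ℝ) (x y : Fin d → ℝ), polar Q x (t • y) = t * polar Q x y := by
    intro t x y; rw [polar_smul_right, smul_eq_mul]
  have hpsl : ∀ (t : ℝ) (x y : Fin d → ℝ), polar Q (t • x) y = t * polar Q x y := by
    intro t x y; rw [polar_smul_left, smul_eq_mul]
  -- nondegeneracy on V
  have hndV : ∀ v ∈ V, v ≠ 0 → ∃ y ∈ V, polar Q v y ≠ 0 := by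
    intro v hv hv0
    by_contra h
    push_neg at h
    refine hv0 (hQnd v ?_)
    intro y
    have hy : y ∈ V ⊔ W := by
      rw [codisjoint_iff.mp hcompl.codisjoint]; trivial
    obtain ⟨yV, hyV, yW, hyW, rfl⟩ := Submodule.mem_sup.mp hy
    rw [polar_add_right, h yV hyV, hVW v hv yW hyW, add_zero]
  -- a nonzero isotropic vector in V
  obtain ⟨⟨vp, hvpV, hvp⟩, ⟨vm, hvmV, hvm⟩⟩ := hindef
  set B := polar Q vm vp with hB
  have hdisc : 0 ≤ B ^ 2 - 4 * Q vp * Q vm := by nlinarith [sq_nonneg B]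
  set t : ℝ := (-B + Real.sqrt (B ^ 2 - 4 * Q vp * Q vm)) / (2 * Q vp) with ht
  set u := vm + t • vp with hudef
  have hA : Q vp ≠ 0 := ne_of_gt hvp
  have hu : Q u = 0 := by
    have hs : Real.sqrt (B ^ 2 - 4 * Q vp * Q vm) ^ 2 = B ^ 2 - 4 * Q vp * Q vm :=
      Real.sq_sqrt hdisc
    rw [hudef, hexp, hsm, hpsr, ← hB, ht]
    field_simp
    rw [show B ^ 2 - Q vm * 4 * Q vp = B ^ 2 - 4 * Q vp * Q vm by ring]
    nlinarith [hs]
  have huV : u ∈ V := V.add_mem hvmV (V.smul_mem t hvpV)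
  have hu0 : u ≠ 0 := by
    intro h
    have hvm' : vm = (-t) • vp := by
      rw [neg_smul, eq_neg_iff_add_eq_zero]; exact h
    have : Q vm = t ^ 2 * Q vp := by rw [hvm', hsm]; ring
    nlinarith [sq_nonneg t]
  -- find an isotropic y ∈ V with polar Q x₁ y ≠ 0
  have hy'' : ∃ y ∈ V, Q y = 0 ∧ polar Q x₁ y ≠ 0 := by
    by_cases hx₁Q : Q x₁ = 0
    · obtain ⟨w, hwV, hc⟩ := hndV x₁ hx₁V hx₁0
      refine ⟨w + (-(Q w) / polar Q x₁ w) • x₁,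
        V.add_mem hwV (V.smul_mem _ hx₁V), ?_, ?_⟩
      · rw [hexp, hsm, hpsr, hx₁Q, hpc w x₁]
        field_simp
        ring
      · rw [polar_add_right, hpsr, hps, hx₁Q]
        simpa using hc
    · by_cases h1 : polar Q x₁ u ≠ 0
      · exact ⟨u, huV, hu, h1⟩
      · push_neg at h1
        obtain ⟨w, hwV, hc'⟩ := hndV u huV hu0
        set c' := polar Q u w with hc'def
        set y := w + (-(Q w) / c') • u with hydef
        have hyV : y ∈ V := V.add_mem hwV (V.smul_mem _ huV)
        have hyQ : Q y = 0 := by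
          rw [hydef, hexp, hsm, hu, hpsr, hpc w u, ← hc'def]
          field_simp
          ring
        have hcy : polar Q u y = c' := by
          rw [hydef, polar_add_right, hpsr, hps, hu]
          simp [hc'def]
        by_cases h2 : polar Q x₁ y ≠ 0
        · exact ⟨y, hyV, hyQ, h2⟩
        · push_neg at h2
          refine ⟨x₁ + (-(Q x₁) / c') • u + y,
            V.add_mem (V.add_mem hx₁V (V.smul_mem _ huV)) hyV, ?_, ?_⟩
          · rw [hexp, hexp, hsm, hu, hpsr, h1, hyQ, polar_add_left, hpsl, hcy, h2]
            field_simp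
            ring
          · rw [polar_add_right, polar_add_right, hpsr, h1, h2, hps]
            simpa using hx₁Q
  obtain ⟨y, hyV, hyQ, hyc⟩ := hy''
  set c := polar Q x₁ y with hcdef
  set s := (a - Q x₂ - Q x₁) / c with hsdef
  -- a functional vanishing on span{y} ⊔ W with φ x₁ = s
  have hnmem : x₁ ∉ (Submodule.span ℝ {y}) ⊔ W := by
    intro hmem
    obtain ⟨z, hz, w, hwW, hzw⟩ := Submodule.mem_sup.mp hmem
    obtain ⟨μ, rfl⟩ := Submodule.mem_span_singleton.mp hz
    apply hyc
    rw [hcdef, ← hzw, polar_add_left, hpsl, hps, hyQ, hpc w y, hVW y hyV w hwW]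
    ring
  obtain ⟨ψ, hψx, hψmap⟩ :=
    Submodule.exists_dual_map_eq_bot_of_notMem hnmem inferInstance
  have hψ0 : ∀ z ∈ (Submodule.span ℝ {y} ⊔ W : Submodule ℝ (Fin d → ℝ)), ψ z = 0 := by
    intro z hz
    have hmem : ψ z ∈ Submodule.map ψ (Submodule.span ℝ {y} ⊔ W) :=
      Submodule.mem_map_of_mem hz
    rw [hψmap] at hmem
    simpa using hmem
  set φ := (s / ψ x₁) • ψ with hφdef
  have hφy : φ y = 0 := by
    have : ψ y = 0 := hψ0 y (Submodule.mem_sup_left (Submodule.mem_span_singleton_self y))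
    simp [hφdef, this]
  have hφW : ∀ w ∈ W, φ w = 0 := by
    intro w hw
    have : ψ w = 0 := hψ0 w (Submodule.mem_sup_right hw)
    simp [hφdef, this]
  have hφx : φ x₁ = s := by
    simp only [hφdef, LinearMap.smul_apply, smul_eq_mul]
    field_simp
  refine ⟨LinearMap.id + φ.smulRight y, ?_, ?_, det_shear φ y hφy, ?_⟩
  · intro v hv
    simpa using V.add_mem hv (V.smul_mem (φ v) hyV)
  · intro w hw
    simp [hφW w hw]
  · have hfx : (LinearMap.id + φ.smulRight y : (Fin d → ℝ) →ₗ[ℝ] (Fin d → ℝ)) x₁ = x₁ + s • y := by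
      simp [hφx]
    rw [hfx, horth _ (V.add_mem hx₁V (V.smul_mem s hyV)) x₂ hx₂, hexp, hsm, hyQ, hpsr,
      ← hcdef, hsdef]
    field_simp
    ring
end
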